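/- arXiv:2306.00493 — 3 statements merged into one kernel-verified Lean document; each statement's English description precedes it below -/
import Mathlib

section
/- Let S be a finite monoid, A a finite set, F ⊆ SOp(A), ρ an S-relation, and s ∈ S. For every tuple r ∈ Γ_F(ρ)_s there exist q ≥ 1, an S-operation f ∈ ⟨F⟩_S with sgn(f) = (s_1, …, s_q), and tuples r_j ∈ ρ_{s_j s} for j ∈ {1,…,q}, such that r = f(r_1, …, r_q). -/
namespace SPreclone

/-- An `S`-operation on `A`: an `(n+1)`-ary operation together with a signum
assigning an element of `S` to each argument. -/
structure SOp (S A : Type*) where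
  n : ℕ
  fn : (Fin (n + 1) → A) → A
  sgn : Fin (n + 1) → S

/-- An `S`-relation on `A`: a family of `(m+1)`-ary relations indexed by `S`. -/
structure SRel (S A : Type*) where
  m : ℕ
  rel : S → Set (Fin (m + 1) → A)

section

variable {S A : Type*} [Monoid S]

/-- `f` S-preserves `ρ`. -/
def SPreserves (f : SOp S A) (ρ : SRel S A) : Prop :=
  ∀ s : S, ∀ r : Fin (f.n + 1) → (Fin (ρ.m + 1) → A),
    (∀ i, r i ∈ ρ.rel (f.sgn i * s)) →
    (fun j => f.fn fun i => r i j) ∈ ρ.rel s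

/-- `S`-polymorphisms of a set of `S`-relations. -/
def SPol (Q : Set (SRel S A)) : Set (SOp S A) := { f | ∀ ρ ∈ Q, SPreserves f ρ }

/-- Invariant `S`-relations of a set of `S`-operations. -/
def SInv (F : Set (SOp S A)) : Set (SRel S A) := { ρ | ∀ f ∈ F, SPreserves f ρ }

/-- The identity operation, with signum `(e)`. -/
def idOp (S A : Type*) [Monoid S] : SOp S A := ⟨0, fun x => x 0, fun _ => 1⟩

/-- Cyclic shift `ζ` of the arguments (and the signa). -/
def cycOp (f : SOp S A) : SOp S A :=
  ⟨f.n, fun x => f.fn fun j => x (j + 1), fun i => f.sgn (i - 1)⟩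

/-- Transposition `τ` of the first two arguments (and their signa). -/
def swapOp (f : SOp S A) : SOp S A :=
  ⟨f.n, fun x => f.fn fun j => x (Equiv.swap 0 1 j), fun i => f.sgn (Equiv.swap 0 1 i)⟩

/-- `∇^s`: adding a fictitious first argument with signum `s`. -/
def nablaOp (s : S) (f : SOp S A) : SOp S A :=
  ⟨f.n + 1, fun x => f.fn fun j => x j.succ, Fin.cases (motive := fun _ => S) s f.sgn⟩

open Classical in
/-- `Δ`: identification of the first two arguments when they have the same signum
(otherwise, and for unary operations, `Δ f := f`). -/
noncomputable def deltaOp (f : SOp S A) : SOp S A :=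
  match f with
  | ⟨0, fn, sgn⟩ => ⟨0, fn, sgn⟩
  | ⟨m + 1, fn, sgn⟩ =>
    if sgn 0 = sgn 1 then
      ⟨m, fun x => fn fun j => x ⟨j.val - 1, by have := j.isLt; omega⟩,
        fun i => sgn i.succ⟩
    else ⟨m + 1, fn, sgn⟩

/-- Composition `(f ∘ g)(x₁,…,x_m,x_{m+1},…,x_{m+n-1}) = f(g(x₁,…,x_m),x_{m+1},…,x_{m+n-1})`,
with signum `(s'₁s₁, …, s'_m s₁, s₂, …, s_n)`. -/
def compOp (f g : SOp S A) : SOp S A :=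
  ⟨g.n + f.n,
   fun x => f.fn fun k => Fin.cases (motive := fun _ => A)
     (g.fn fun i => x ⟨i.val, by have := i.isLt; omega⟩)
     (fun j => x ⟨g.n + 1 + j.val, by have := j.isLt; omega⟩) k,
   fun i =>
     if h : i.val < g.n + 1 then g.sgn ⟨i.val, h⟩ * f.sgn 0
     else f.sgn ⟨i.val - g.n, by have := i.isLt; omega⟩⟩

/-- A set of `S`-operations is an `S`-preclone if it contains the identity and is closed
under `ζ`, `τ`, `∇^s`, `Δ` and composition. -/
def IsSPreclone (F : Set (SOp S A)) : Prop :=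
  idOp S A ∈ F ∧
  (∀ f ∈ F, cycOp f ∈ F) ∧
  (∀ f ∈ F, swapOp f ∈ F) ∧
  (∀ (s : S), ∀ f ∈ F, nablaOp s f ∈ F) ∧
  (∀ f ∈ F, deltaOp f ∈ F) ∧
  (∀ f ∈ F, ∀ g ∈ F, compOp f g ∈ F)

/-- The `S`-preclone generated by `F` (the least `S`-preclone containing `F`). -/
def SSg (F : Set (SOp S A)) : Set (SOp S A) := ⋂₀ { G | IsSPreclone G ∧ F ⊆ G }

/-- `δ^S := (Δ_A)_{s ∈ S}`. -/
def deltaS (S A : Type*) : SRel S A := ⟨1, fun _ => { a | a 0 = a 1 }⟩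

/-- Componentwise cyclic shift of coordinates. -/
def cycRel (ρ : SRel S A) : SRel S A :=
  ⟨ρ.m, fun s => { b | (fun i => b (i - 1)) ∈ ρ.rel s }⟩

/-- Componentwise transposition of the first two coordinates. -/
def swapRel (ρ : SRel S A) : SRel S A :=
  ⟨ρ.m, fun s => { b | (fun i => b (Equiv.swap 0 1 i)) ∈ ρ.rel s }⟩

/-- Componentwise deletion of the first coordinate (identity on unary relations). -/
def prRel (ρ : SRel S A) : SRel S A :=
  match ρ with
  | ⟨0, r⟩ => ⟨0, r⟩
  | ⟨m + 1, r⟩ => ⟨m, fun s => { b | ∃ a ∈ r s, b = fun j => a j.succ }⟩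

/-- Componentwise Cartesian product. -/
def prodRel (ρ ρ' : SRel S A) : SRel S A :=
  ⟨ρ.m + ρ'.m + 1, fun s =>
    { c | (fun i : Fin (ρ.m + 1) => c ⟨i.val, by have := i.isLt; omega⟩) ∈ ρ.rel s ∧
          (fun i : Fin (ρ'.m + 1) => c ⟨ρ.m + 1 + i.val, by have := i.isLt; omega⟩) ∈ ρ'.rel s }⟩

/-- Componentwise intersection; empty if the arities differ. -/
def interRel (ρ ρ' : SRel S A) : SRel S A :=
  if h : ρ.m = ρ'.m then
    ⟨ρ.m, fun s => { a | a ∈ ρ.rel s ∧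
        (fun i : Fin (ρ'.m + 1) => a (Fin.cast (by omega) i)) ∈ ρ'.rel s }⟩
  else ⟨ρ.m, fun _ => ∅⟩

/-- Index translation `μ_v(ρ) := (ρ_{sv})_{s ∈ S}`. -/
def muRel (v : S) (ρ : SRel S A) : SRel S A := ⟨ρ.m, fun s => ρ.rel (s * v)⟩

/-- `v`-self-intersection `(⊓^v ρ)_s := ⋂ { ρ_{s'} ∣ s'v = s }`
(an empty intersection being the full relation). -/
def selfInterRel (v : S) (ρ : SRel S A) : SRel S A :=
  ⟨ρ.m, fun s => { a | ∀ s' : S, s' * v = s → a ∈ ρ.rel s' }⟩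

/-- A set of `S`-relations is an `S`-relational clone if it contains `δ^S` and is
closed under `ζ`, `τ`, `pr`, `×`, `∧`, `μ_v` and `⊓^v`. -/
def IsSRelClone (Q : Set (SRel S A)) : Prop :=
  deltaS S A ∈ Q ∧
  (∀ ρ ∈ Q, cycRel ρ ∈ Q) ∧
  (∀ ρ ∈ Q, swapRel ρ ∈ Q) ∧
  (∀ ρ ∈ Q, prRel ρ ∈ Q) ∧
  (∀ ρ ∈ Q, ∀ ρ' ∈ Q, prodRel ρ ρ' ∈ Q) ∧
  (∀ ρ ∈ Q, ∀ ρ' ∈ Q, interRel ρ ρ' ∈ Q) ∧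
  (∀ (v : S), ∀ ρ ∈ Q, muRel v ρ ∈ Q) ∧
  (∀ (v : S), ∀ ρ ∈ Q, selfInterRel v ρ ∈ Q)

/-- The `S`-relational clone generated by `Q`. -/
def SRg (Q : Set (SRel S A)) : Set (SRel S A) := ⋂₀ { R | IsSRelClone R ∧ Q ⊆ R }

/-- `Γ_F(ρ)`: the least `S`-relation of the same arity containing `ρ` and invariant
for `F` (defined as the intersection of all such). -/
def Gamma (F : Set (SOp S A)) (ρ : SRel S A) : SRel S A :=
  ⟨ρ.m, fun s => ⋂ g ∈ { g : S → Set (Fin (ρ.m + 1) → A) |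
      (⟨ρ.m, g⟩ : SRel S A) ∈ SInv F ∧ ∀ t, ρ.rel t ⊆ g t }, g s⟩

/-- Trivial `S`-operations (trivial projections): projections whose essential
argument has signum `e`. -/
def SJ (S A : Type*) [Monoid S] : Set (SOp S A) :=
  { f | ∃ i : Fin (f.n + 1), f.sgn i = 1 ∧ ∀ x, f.fn x = x i }

/-- A diagonal relation: empty, or defined by an equivalence relation on the coordinates. -/
def IsDiagonal {A : Type*} {m : ℕ} (σ : Set (Fin m → A)) : Prop :=
  σ = ∅ ∨ ∃ ε : Fin m → Fin m → Prop, Equivalence ε ∧ σ = { a | ∀ i j, ε i j → a i = a j }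

/-- `S`-diagonal `S`-relations. -/
def SD (S A : Type*) [Monoid S] : Set (SRel S A) :=
  { ρ | (∀ s, IsDiagonal (ρ.rel s)) ∧
      ∀ s t : S, ({ x | ∃ u, x = u * s } : Set S) ⊆ { x | ∃ u, x = u * t } →
        ρ.rel s ⊆ ρ.rel t }

/-- Projection of an `S`-relation to the rows `z 0, …, z t` (componentwise). -/
def prMulti {t : ℕ} (ρ : SRel S A) (z : Fin (t + 1) → Fin (ρ.m + 1)) : SRel S A :=
  ⟨t, fun s => { b | ∃ a ∈ ρ.rel s, b = fun j => a (z j) }⟩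

/-- One step of the inductive construction of `Γ_F(ρ)`:
`R s ∪ { f(r₁,…,r_n) ∣ f ∈ F, r_j ∈ R (sgn(f)_j * s) }`. -/
def gammaStep (F : Set (SOp S A)) {m : ℕ}
    (R : S → Set (Fin (m + 1) → A)) : S → Set (Fin (m + 1) → A) :=
  fun s => R s ∪ { b | ∃ f ∈ F, ∃ r : Fin (f.n + 1) → (Fin (m + 1) → A),
    (∀ j, r j ∈ R (f.sgn j * s)) ∧ b = fun z => f.fn fun j => r j z }

/-- `χ` is (a presentation of) the `S`-relation `χ^λ`: its rows are enumerated by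
*all* tuples of `A^n` via `e`, and its `s`-component consists exactly of the columns
`κ_i` with `λ i = s`. -/
def IsChi {n : ℕ} (lam : Fin n → S) (χ : SRel S A) : Prop :=
  ∃ e : Fin (χ.m + 1) ≃ (Fin n → A),
    ∀ s, χ.rel s = { c | ∃ i, lam i = s ∧ c = fun z => e z i }

/-- `γ_Q(ρ)`: the least `S`-relation of the same arity containing `ρ` and belonging
to the `S`-relational clone generated by `Q` (defined as the intersection of all such). -/
def gammaQ (Q : Set (SRel S A)) (ρ : SRel S A) : SRel S A :=
  ⟨ρ.m, fun s => ⋂ g ∈ { g : S → Set (Fin (ρ.m + 1) → A) |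
      (⟨ρ.m, g⟩ : SRel S A) ∈ SRg Q ∧ ∀ t, ρ.rel t ⊆ g t }, g s⟩

/-- `π`-dual of an `S`-operation. -/
def opPi (π : Equiv.Perm A) (f : SOp S A) : SOp S A :=
  ⟨f.n, fun x => π (f.fn fun i => π.symm (x i)), f.sgn⟩

/-- `π`-dual of an `S`-relation. -/
def relPi (π : Equiv.Perm A) (ρ : SRel S A) : SRel S A :=
  ⟨ρ.m, fun s => { b | ∃ a ∈ ρ.rel s, b = fun i => π (a i) }⟩

/-- `h`-dual of an `S`-operation (only the signum changes). -/
def opH (h : S ≃* S) (f : SOp S A) : SOp S A :=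
  ⟨f.n, f.fn, fun i => h (f.sgn i)⟩

/-- `h`-dual of an `S`-relation: `ρ^h := (ρ_{h⁻¹(s)})_{s ∈ S}`. -/
def relH (h : S ≃* S) (ρ : SRel S A) : SRel S A :=
  ⟨ρ.m, fun s => ρ.rel (h.symm s)⟩

end

/-- An ordinary (unsigned) operation on `A`. -/
structure UOp (A : Type*) where
  n : ℕ
  fn : (Fin (n + 1) → A) → A

/-- An ordinary (unsigned) relation on `A`. -/
structure URel (A : Type*) where
  m : ℕ
  rel : Set (Fin (m + 1) → A)

/-- Ordinary preservation of a relation by an operation. -/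
def UPreserves {A : Type*} (f : UOp A) (σ : URel A) : Prop :=
  ∀ r : Fin (f.n + 1) → (Fin (σ.m + 1) → A),
    (∀ i, r i ∈ σ.rel) → (fun j => f.fn fun i => r i j) ∈ σ.rel

/-- Polymorphisms of a set of ordinary relations. -/
def UPol {A : Type*} (R : Set (URel A)) : Set (UOp A) := { f | ∀ σ ∈ R, UPreserves f σ }

/-- A clone: contains all projections and is closed under composition. -/
def IsClone {A : Type*} (C : Set (UOp A)) : Prop :=
  (∀ (n : ℕ) (i : Fin (n + 1)), (⟨n, fun x => x i⟩ : UOp A) ∈ C) ∧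
  (∀ f ∈ C, ∀ (m : ℕ) (g : Fin (f.n + 1) → ((Fin (m + 1) → A) → A)),
    (∀ i, (⟨m, g i⟩ : UOp A) ∈ C) → (⟨m, fun x => f.fn fun i => g i x⟩ : UOp A) ∈ C)

/-- The clone generated by a set of operations. -/
def CloneGen {A : Type*} (G : Set (UOp A)) : Set (UOp A) := ⋂₀ { C | IsClone C ∧ G ⊆ C }

section Aux

variable {S A : Type*} [Monoid S]

lemma subset_SSg (F : Set (SOp S A)) : F ⊆ SSg F :=
  fun _ hf => Set.mem_sInter.mpr fun _ hG => hG.2 hf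

lemma isSPreclone_SSg (F : Set (SOp S A)) : IsSPreclone (SSg F) := by
  refine ⟨Set.mem_sInter.mpr fun G hG => hG.1.1,
    fun f hf => Set.mem_sInter.mpr fun G hG => hG.1.2.1 f (Set.mem_sInter.mp hf G hG),
    fun f hf => Set.mem_sInter.mpr fun G hG => hG.1.2.2.1 f (Set.mem_sInter.mp hf G hG),
    fun s f hf => Set.mem_sInter.mpr fun G hG => hG.1.2.2.2.1 s f (Set.mem_sInter.mp hf G hG),
    fun f hf => Set.mem_sInter.mpr fun G hG => hG.1.2.2.2.2.1 f (Set.mem_sInter.mp hf G hG),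
    fun f hf g hg => Set.mem_sInter.mpr fun G hG =>
      hG.1.2.2.2.2.2 f (Set.mem_sInter.mp hf G hG) g (Set.mem_sInter.mp hg G hG)⟩

/-- Tuples representable as `f(rr)` with `f ∈ ⟨F⟩_S` and `rr j ∈ ρ_{sgn(f)_j · u}`. -/
def Rep (F : Set (SOp S A)) (ρ : SRel S A) (u : S) : Set (Fin (ρ.m + 1) → A) :=
  { v | ∃ f ∈ SSg F, ∃ rr : Fin (f.n + 1) → (Fin (ρ.m + 1) → A),
      (∀ j, rr j ∈ ρ.rel (f.sgn j * u)) ∧ v = fun z => f.fn fun j => rr j z }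

lemma mem_Rep_of_mem {F : Set (SOp S A)} {ρ : SRel S A} {u : S}
    {v : Fin (ρ.m + 1) → A} (h : v ∈ ρ.rel u) : v ∈ Rep F ρ u :=
  ⟨idOp S A, (isSPreclone_SSg F).1, fun _ => v,
   fun _ => by simpa [idOp] using h, rfl⟩

/-- Number of argument tuples not directly in `ρ`. -/
noncomputable def badCount (ρ : SRel S A) (u : S) (P : SOp S A)
    (t : Fin (P.n + 1) → (Fin (ρ.m + 1) → A)) : ℕ :=
  {j : Fin (P.n + 1) | t j ∉ ρ.rel (P.sgn j * u)}.ncard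

lemma rotate_card {ρ : SRel S A} {u : S} (P : SOp S A)
    (t : Fin (P.n + 1) → (Fin (ρ.m + 1) → A)) :
    badCount ρ u (cycOp P) (fun i : Fin (P.n + 1) => t (i - 1)) = badCount ρ u P t := by
  unfold badCount
  show ({j : Fin (P.n + 1) | t (j - 1) ∉ ρ.rel (P.sgn (j - 1) * u)}).ncard
      = ({j : Fin (P.n + 1) | t j ∉ ρ.rel (P.sgn j * u)}).ncard
  have hset : {j : Fin (P.n + 1) | t (j - 1) ∉ ρ.rel (P.sgn (j - 1) * u)}
      = (· + 1) '' {j : Fin (P.n + 1) | t j ∉ ρ.rel (P.sgn j * u)} := by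
    ext j
    simp only [Set.mem_image, Set.mem_setOf_eq]
    constructor
    · intro h; exact ⟨j - 1, h, by simp⟩
    · rintro ⟨i, hi, rfl⟩; simpa using hi
  rw [hset, Set.ncard_image_of_injective _ (add_left_injective 1)]

omit [Monoid S] in
lemma rotate_value {ρ : SRel S A} (P : SOp S A)
    (t : Fin (P.n + 1) → (Fin (ρ.m + 1) → A)) :
    (fun z => (cycOp P).fn fun j => (fun i : Fin (P.n + 1) => t (i - 1)) j z)
      = (fun z : Fin (ρ.m + 1) => P.fn fun j => t j z) := by
  funext z
  show P.fn (fun j => t (j + 1 - 1) z) = P.fn (fun j => t j z)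
  simp

/-- Cast between `Fin (n+1)` and `Fin (m+1)` along a (definitional) equality. -/
def coeF {n m : ℕ} (j : Fin (n + 1)) (h : n = m) : Fin (m + 1) := ⟨j.val, h ▸ j.isLt⟩

lemma expose {F : Set (SOp S A)} {ρ : SRel S A} {u : S} :
    ∀ (d : ℕ) (P : SOp S A), P ∈ SSg F →
    ∀ t : Fin (P.n + 1) → (Fin (ρ.m + 1) → A),
    (∀ j, t j ∈ Rep F ρ (P.sgn j * u)) →
    ∀ j0 : Fin (P.n + 1), t j0 ∉ ρ.rel (P.sgn j0 * u) →
    P.n - j0.val ≤ d →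
    ∃ P' ∈ SSg F, ∃ t' : Fin (P'.n + 1) → (Fin (ρ.m + 1) → A),
      (∀ j, t' j ∈ Rep F ρ (P'.sgn j * u)) ∧
      t' 0 ∉ ρ.rel (P'.sgn 0 * u) ∧
      badCount ρ u P' t' = badCount ρ u P t ∧
      (fun z => P'.fn fun j => t' j z) = (fun z => P.fn fun j => t j z) := by
  intro d
  induction d with
  | zero =>
    intro P hP t hrep j0 hbad hd
    have hj0 : j0.val = P.n := by have := j0.isLt; omega
    refine ⟨cycOp P, (isSPreclone_SSg F).2.1 P hP,
      (fun i : Fin (P.n + 1) => t (i - 1)),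
      (fun j : Fin (P.n + 1) => hrep (j - 1)), ?_,
      rotate_card P t, rotate_value P t⟩
    have h01 : (0 : Fin (P.n + 1)) - 1 = j0 := by
      apply Fin.ext
      simp [Fin.sub_def, hj0]
    show t ((0 : Fin (P.n + 1)) - 1) ∉ ρ.rel (P.sgn ((0 : Fin (P.n + 1)) - 1) * u)
    rw [h01]; exact hbad
  | succ d ih =>
    intro P hP t hrep j0 hbad hd
    by_cases hj0 : j0.val = P.n
    · refine ⟨cycOp P, (isSPreclone_SSg F).2.1 P hP,
        (fun i : Fin (P.n + 1) => t (i - 1)),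
        (fun j : Fin (P.n + 1) => hrep (j - 1)), ?_,
        rotate_card P t, rotate_value P t⟩
      have h01 : (0 : Fin (P.n + 1)) - 1 = j0 := by
        apply Fin.ext
        simp [Fin.sub_def, hj0]
      show t ((0 : Fin (P.n + 1)) - 1) ∉ ρ.rel (P.sgn ((0 : Fin (P.n + 1)) - 1) * u)
      rw [h01]; exact hbad
    · have hlt : j0.val < P.n := by have := j0.isLt; omega
      have hval1 : (j0 + 1).val = j0.val + 1 :=
        Fin.val_add_one_of_lt (by rw [Fin.lt_def, Fin.val_last]; omega)
      have hbad' : t (j0 + 1 - 1) ∉ ρ.rel (P.sgn (j0 + 1 - 1) * u) := by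
        simpa using hbad
      obtain ⟨P', hP', t', hrep', hbad0, hcard, hvalue⟩ :=
        ih (cycOp P) ((isSPreclone_SSg F).2.1 P hP)
          (fun i : Fin (P.n + 1) => t (i - 1))
          (fun j : Fin (P.n + 1) => hrep (j - 1))
          (coeF (j0 + 1) rfl)
          (by show t (j0 + 1 - 1) ∉ ρ.rel (P.sgn (j0 + 1 - 1) * u); exact hbad')
          (by show P.n - ((j0 + 1 : Fin (P.n + 1))).val ≤ d; rw [hval1]; omega)
      exact ⟨P', hP', t', hrep', hbad0, by rw [hcard, rotate_card],
        by rw [hvalue, rotate_value]⟩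


lemma comp_step {F : Set (SOp S A)} {ρ : SRel S A} {u : S}
    (P' : SOp S A) (hP' : P' ∈ SSg F)
    (t' : Fin (P'.n + 1) → (Fin (ρ.m + 1) → A))
    (hrep' : ∀ j, t' j ∈ Rep F ρ (P'.sgn j * u))
    (hbad0 : t' 0 ∉ ρ.rel (P'.sgn 0 * u))
    (f : SOp S A) (hf : f ∈ SSg F)
    (rrf : Fin (f.n + 1) → (Fin (ρ.m + 1) → A))
    (hrrf : ∀ j, rrf j ∈ ρ.rel (f.sgn j * (P'.sgn 0 * u)))
    (heq0 : t' 0 = fun z => f.fn fun j => rrf j z) :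
    ∃ P'' ∈ SSg F, ∃ t'' : Fin (P''.n + 1) → (Fin (ρ.m + 1) → A),
      (∀ j, t'' j ∈ Rep F ρ (P''.sgn j * u)) ∧
      badCount ρ u P'' t'' + 1 ≤ badCount ρ u P' t' ∧
      (fun z => P''.fn fun j => t'' j z) = (fun z => P'.fn fun j => t' j z) := by
  refine ⟨compOp P' f, (isSPreclone_SSg F).2.2.2.2.2 P' hP' f hf,
    (fun j : Fin (f.n + P'.n + 1) =>
      if h : j.val < f.n + 1 then rrf ⟨j.val, h⟩
      else t' ⟨j.val - f.n, by have := j.isLt; omega⟩), ?_, ?_, ?_⟩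
  · intro j
    have hjn : j.val < f.n + P'.n + 1 := j.isLt
    show (if h : j.val < f.n + 1 then rrf ⟨j.val, h⟩
        else t' ⟨j.val - f.n, by omega⟩) ∈
      Rep F ρ ((if h : j.val < f.n + 1 then f.sgn ⟨j.val, h⟩ * P'.sgn 0
        else P'.sgn ⟨j.val - f.n, by omega⟩) * u)
    by_cases h : j.val < f.n + 1
    · rw [dif_pos h, dif_pos h, mul_assoc]
      exact mem_Rep_of_mem (hrrf ⟨j.val, h⟩)
    · rw [dif_neg h, dif_neg h]
      exact hrep' _
  · -- cardinality decreases
    have h0 : (0 : Fin (P'.n + 1)) ∈ {j : Fin (P'.n + 1) | t' j ∉ ρ.rel (P'.sgn j * u)} :=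
      hbad0
    have hle : badCount ρ u (compOp P' f)
        (fun j : Fin (f.n + P'.n + 1) =>
          if h : j.val < f.n + 1 then rrf ⟨j.val, h⟩
          else t' ⟨j.val - f.n, by have := j.isLt; omega⟩) ≤
        ({j : Fin (P'.n + 1) | t' j ∉ ρ.rel (P'.sgn j * u)} \ {0}).ncard := by
      apply Set.ncard_le_ncard_of_injOn
        (fun j : Fin (f.n + P'.n + 1) => (⟨j.val - f.n, by have := j.isLt; omega⟩ : Fin (P'.n + 1)))
      · intro j hj
        have hjn : j.val < f.n + P'.n + 1 := j.isLt
        have hj' : (if h : j.val < f.n + 1 then rrf ⟨j.val, h⟩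
            else t' ⟨j.val - f.n, by omega⟩) ∉
          ρ.rel ((if h : j.val < f.n + 1 then f.sgn ⟨j.val, h⟩ * P'.sgn 0
            else P'.sgn ⟨j.val - f.n, by omega⟩) * u) := hj
        have h : ¬ j.val < f.n + 1 := by
          intro h
          rw [dif_pos h, dif_pos h, mul_assoc] at hj'
          exact hj' (hrrf ⟨j.val, h⟩)
        rw [dif_neg h, dif_neg h] at hj'
        constructor
        · exact hj'
        · intro hc
          have : j.val - f.n = 0 := congrArg Fin.val hc
          omega
      · intro j1 h1 j2 h2 hee
        have hjn1 : j1.val < f.n + P'.n + 1 := j1.isLt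
        have hjn2 : j2.val < f.n + P'.n + 1 := j2.isLt
        have h1' : ¬ j1.val < f.n + 1 := by
          intro h
          have hj' : (if h : j1.val < f.n + 1 then rrf ⟨j1.val, h⟩
              else t' ⟨j1.val - f.n, by omega⟩) ∉
            ρ.rel ((if h : j1.val < f.n + 1 then f.sgn ⟨j1.val, h⟩ * P'.sgn 0
              else P'.sgn ⟨j1.val - f.n, by omega⟩) * u) := h1
          rw [dif_pos h, dif_pos h, mul_assoc] at hj'
          exact absurd (hrrf ⟨j1.val, h⟩) hj'
        have h2' : ¬ j2.val < f.n + 1 := by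
          intro h
          have hj' : (if h : j2.val < f.n + 1 then rrf ⟨j2.val, h⟩
              else t' ⟨j2.val - f.n, by omega⟩) ∉
            ρ.rel ((if h : j2.val < f.n + 1 then f.sgn ⟨j2.val, h⟩ * P'.sgn 0
              else P'.sgn ⟨j2.val - f.n, by omega⟩) * u) := h2
          rw [dif_pos h, dif_pos h, mul_assoc] at hj'
          exact absurd (hrrf ⟨j2.val, h⟩) hj'
        have hvv : j1.val - f.n = j2.val - f.n := congrArg Fin.val hee
        exact Fin.ext (by omega)
    have hlt : ({j : Fin (P'.n + 1) | t' j ∉ ρ.rel (P'.sgn j * u)} \ {0}).ncard <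
        badCount ρ u P' t' := by
      apply Set.ncard_lt_ncard _ (Set.toFinite _)
      constructor
      · exact Set.diff_subset
      · intro hsub
        exact (hsub h0).2 rfl
    omega
  · funext z
    show P'.fn (fun k => Fin.cases (motive := fun _ => A)
        (f.fn fun i => (fun j : Fin (f.n + P'.n + 1) =>
          if h : j.val < f.n + 1 then rrf ⟨j.val, h⟩
          else t' ⟨j.val - f.n, by have := j.isLt; omega⟩)
            ⟨i.val, by have := i.isLt; omega⟩ z)
        (fun j => (fun j : Fin (f.n + P'.n + 1) =>
          if h : j.val < f.n + 1 then rrf ⟨j.val, h⟩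
          else t' ⟨j.val - f.n, by have := j.isLt; omega⟩)
            ⟨f.n + 1 + j.val, by have := j.isLt; omega⟩ z) k)
      = P'.fn (fun j => t' j z)
    congr 1
    funext k
    induction k using Fin.cases with
    | zero =>
      rw [Fin.cases_zero]
      have e1 : ∀ i : Fin (f.n + 1),
          (if h : (⟨i.val, by have := i.isLt; omega⟩ : Fin (f.n + P'.n + 1)).val < f.n + 1
            then rrf ⟨(⟨i.val, by have := i.isLt; omega⟩ : Fin (f.n + P'.n + 1)).val, h⟩
            else t' ⟨(⟨i.val, by have := i.isLt; omega⟩ : Fin (f.n + P'.n + 1)).val - f.n,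
              by omega⟩) = rrf i := by
        intro i
        rw [dif_pos i.isLt]
      simp only [e1]
      rw [heq0]
    | succ j =>
      rw [Fin.cases_succ]
      have hnlt : ¬ (f.n + 1 + j.val < f.n + 1) := by omega
      simp only [dif_neg hnlt]
      congr 1
      apply Fin.ext
      show f.n + 1 + j.val - f.n = j.val + 1
      omega

lemma buildRep {F : Set (SOp S A)} {ρ : SRel S A} {u : S} :
    ∀ (c : ℕ) (P : SOp S A), P ∈ SSg F →
    ∀ t : Fin (P.n + 1) → (Fin (ρ.m + 1) → A),
    (∀ j, t j ∈ Rep F ρ (P.sgn j * u)) →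
    badCount ρ u P t ≤ c →
    (fun z => P.fn fun j => t j z) ∈ Rep F ρ u := by
  intro c
  induction c with
  | zero =>
    intro P hP t hrep hc
    have hall : ∀ j, t j ∈ ρ.rel (P.sgn j * u) := by
      intro j
      by_contra h
      have hpos : 0 < badCount ρ u P t :=
        (Set.ncard_pos (Set.toFinite _)).mpr ⟨j, h⟩
      omega
    exact ⟨P, hP, t, hall, rfl⟩
  | succ c ih =>
    intro P hP t hrep hc
    by_cases hall : ∀ j, t j ∈ ρ.rel (P.sgn j * u)
    · exact ⟨P, hP, t, hall, rfl⟩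
    push_neg at hall
    obtain ⟨j0, hj0⟩ := hall
    obtain ⟨P', hP', t', hrep', hbad0, hcard, hval⟩ :=
      expose P.n P hP t hrep j0 hj0 (by omega)
    obtain ⟨f, hf, rrf, hrrf, heq0⟩ := hrep' 0
    obtain ⟨P'', hP'', t'', hrep'', hcnt, hval''⟩ :=
      comp_step P' hP' t' hrep' hbad0 f hf rrf hrrf heq0
    have hmem := ih P'' hP'' t'' hrep'' (by omega)
    rw [hval'', hval] at hmem
    exact hmem

end Aux

/-- Every tuple `r ∈ Γ_F(ρ)_s` is of the form `f(r₁,…,r_q)` for some `S`-operation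
`f ∈ ⟨F⟩_S` with `sgn f = (s₁,…,s_q)` and tuples `r_j ∈ ρ_{s_j s}`. -/
theorem mem_Gamma_iff_image {S A : Type*} [Monoid S] [Fintype S] [Fintype A]
    (F : Set (SOp S A)) (ρ : SRel S A) (s : S) (r : Fin (ρ.m + 1) → A)
    (hr : r ∈ (Gamma F ρ).rel s) :
    ∃ f ∈ SSg F, ∃ rr : Fin (f.n + 1) → (Fin (ρ.m + 1) → A),
      (∀ j, rr j ∈ ρ.rel (f.sgn j * s)) ∧ r = fun z => f.fn fun j => rr j z := by
  have hInv : (⟨ρ.m, fun v => Rep F ρ v⟩ : SRel S A) ∈ SInv F := by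
    intro g hg uu rt hrt
    exact buildRep (F := F) (ρ := ρ) (u := uu) (badCount ρ uu g rt) g
      (subset_SSg F hg) rt hrt le_rfl
  have hsub : ∀ v, ρ.rel v ⊆ Rep F ρ v := fun v x hx => mem_Rep_of_mem hx
  have hmem : r ∈ ⋂ g ∈ { g : S → Set (Fin (ρ.m + 1) → A) |
      (⟨ρ.m, g⟩ : SRel S A) ∈ SInv F ∧ ∀ t, ρ.rel t ⊆ g t }, g s := hr
  exact Set.mem_iInter₂.mp hmem (fun v => Rep F ρ v) ⟨hInv, hsub⟩

end SPreclone
end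

section
/- Let S be a finite monoid, A a finite set, and F ⊆ SOp(A). Every m-ary invariant S-relation ρ ∈ SInv F can be obtained from Γ_F(χ^{λ_ρ}) by a projection pr_{z_1,…,z_m}, where λ_ρ is the signum listing the tuples of ρ. Consequently, SInv F is the S-relational clone generated by { Γ_F(χ^{λ_ρ}) : ρ ∈ SRel(A) }. -/
namespace SPreclone

set_option linter.unusedSectionVars false

section Aux

variable {S A : Type*} [Monoid S]

private lemma mk_congr {m : ℕ} {g g' : S → Set (Fin (m + 1) → A)}
    (h : ∀ s a, a ∈ g s ↔ a ∈ g' s) : (⟨m, g⟩ : SRel S A) = ⟨m, g'⟩ := by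
  have : g = g' := funext fun s => Set.ext (h s)
  rw [this]

private lemma fmk {n a b : ℕ} {ha : a < n} {hb : b < n} (h : a = b) :
    (⟨a, ha⟩ : Fin n) = ⟨b, hb⟩ := by subst h; rfl

lemma sinv_clone (F : Set (SOp S A)) : IsSRelClone (SInv F) := by
  refine ⟨?_, ?_, ?_, ?_, ?_, ?_, ?_, ?_⟩
  · intro f _ s r hr
    show f.fn (fun i => r i 0) = f.fn (fun i => r i 1)
    exact congrArg f.fn (funext fun i => hr i)
  · intro ρ hρ f hf s r hr
    exact hρ f hf s (fun i (w : Fin (ρ.m + 1)) => let w' : Fin (ρ.m + 1) := w - 1; r i w') fun i => hr i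
  · intro ρ hρ f hf s r hr
    exact hρ f hf s (fun i (w : Fin (ρ.m + 1)) => let w' : Fin (ρ.m + 1) := Equiv.swap 0 1 w; r i w') fun i => hr i
  · intro ρ hρ
    obtain ⟨m, g⟩ := ρ
    cases m with
    | zero => exact hρ
    | succ m =>
      intro f hf s r hr
      choose a ha hb using hr
      refine ⟨fun w => f.fn fun i => a i w, hρ f hf s a ha, ?_⟩
      funext j
      exact congrArg f.fn (funext fun i => by rw [hb i])
  · intro ρ hρ ρ' hρ' f hf s r hr
    exact ⟨hρ f hf s (fun i (w : Fin (ρ.m + 1)) =>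
             r i (⟨w.val, by have := w.isLt; omega⟩ : Fin (ρ.m + ρ'.m + 1 + 1))) fun i => (hr i).1,
           hρ' f hf s (fun i (w : Fin (ρ'.m + 1)) =>
             r i (⟨ρ.m + 1 + w.val, by have := w.isLt; omega⟩ : Fin (ρ.m + ρ'.m + 1 + 1)))
             fun i => (hr i).2⟩
  · intro ρ hρ ρ' hρ'
    unfold interRel
    by_cases h : ρ.m = ρ'.m
    · rw [dif_pos h]
      intro f hf s r hr
      exact ⟨hρ f hf s r fun i => (hr i).1,
             hρ' f hf s (fun i (w : Fin (ρ'.m + 1)) => r i (Fin.cast (show ρ'.m + 1 = ρ.m + 1 by omega) w)) fun i => (hr i).2⟩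
    · rw [dif_neg h]
      intro f hf s r hr
      exact absurd (hr 0) (Set.notMem_empty _)
  · intro v ρ hρ f hf s r hr
    exact hρ f hf (s * v) r fun i => by rw [← mul_assoc]; exact hr i
  · intro v ρ hρ f hf s r hr
    intro s' hs'
    exact hρ f hf s' r fun i => hr i (f.sgn i * s') (by rw [mul_assoc, hs'])

lemma gamma_inv (F : Set (SOp S A)) (ρ : SRel S A) : Gamma F ρ ∈ SInv F := by
  intro f hf s r hr
  refine Set.mem_iInter₂.2 fun g hg => ?_
  exact hg.1 f hf s r fun i => Set.mem_iInter₂.1 (hr i) g hg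

lemma subset_gamma (F : Set (SOp S A)) (ρ : SRel S A) (t : S) :
    ρ.rel t ⊆ (Gamma F ρ).rel t :=
  fun _ hc => Set.mem_iInter₂.2 fun _ hg => hg.2 t hc

lemma gamma_subset (F : Set (SOp S A)) (ρ : SRel S A)
    {g : S → Set (Fin (ρ.m + 1) → A)}
    (hg : (⟨ρ.m, g⟩ : SRel S A) ∈ SInv F) (hsub : ∀ t, ρ.rel t ⊆ g t) :
    ∀ s a, a ∈ (Gamma F ρ).rel s → a ∈ g s :=
  fun _ _ ha => Set.mem_iInter₂.1 ha _ ⟨hg, hsub⟩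

lemma proj_of_inv {F : Set (SOp S A)} {ρ : SRel S A} (hρ : ρ ∈ SInv F) {nn : ℕ}
    (rr : Fin nn → (Fin (ρ.m + 1) → A)) (lam : Fin nn → S)
    (hlist : ∀ s, ρ.rel s = { c | ∃ i, lam i = s ∧ c = rr i })
    (χ : SRel S A) (hchi : IsChi lam χ) :
    ∃ z : Fin (ρ.m + 1) → Fin (χ.m + 1), ρ = prMulti (Gamma F χ) z := by
  obtain ⟨e, he⟩ := hchi
  refine ⟨fun j => e.symm fun i => rr i j, ?_⟩
  set z : Fin (ρ.m + 1) → Fin (χ.m + 1) := fun j => e.symm fun i => rr i j with hz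
  have he2 : ρ.rel = fun s =>
      {b : Fin (ρ.m + 1) → A | ∃ a ∈ (Gamma F χ).rel s, b = fun j => a (z j)} := by
    funext s
    ext b
    constructor
    · intro hb
      rw [hlist s] at hb
      obtain ⟨i, rfl, rfl⟩ := hb
      refine ⟨fun w => e w i, subset_gamma F χ (lam i) ?_, ?_⟩
      · rw [he (lam i)]
        exact ⟨i, rfl, rfl⟩
      · funext j
        show rr i j = e (z j) i
        simp only [hz, Equiv.apply_symm_apply]
    · rintro ⟨a, ha, rfl⟩
      have hσinv : (⟨χ.m, fun s' =>
          {a : Fin (χ.m + 1) → A | (fun j => a (z j)) ∈ ρ.rel s'}⟩ : SRel S A) ∈ SInv F := by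
        intro f hf s' r hr
        exact hρ f hf s' (fun i j => r i (z j)) fun i => hr i
      have hσsub : ∀ t', χ.rel t' ⊆
          {a : Fin (χ.m + 1) → A | (fun j => a (z j)) ∈ ρ.rel t'} := by
        intro t' c hc
        rw [he t'] at hc
        obtain ⟨i, hit, rfl⟩ := hc
        show (fun j => (fun w => e w i) (z j)) ∈ ρ.rel t'
        have hri : (fun j => (fun w => e w i) (z j)) = rr i := by
          funext j
          show e (z j) i = rr i j
          simp only [hz, Equiv.apply_symm_apply]
        rw [hri, hlist t']
        exact ⟨i, hit, rfl⟩
      exact gamma_subset F χ hσinv hσsub s a ha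
  show ρ = prMulti (Gamma F χ) z
  calc ρ = ⟨ρ.m, ρ.rel⟩ := rfl
    _ = prMulti (Gamma F χ) z := by rw [he2]; rfl

lemma full_mem {R : Set (SRel S A)} (hR : IsSRelClone R) (m : ℕ) :
    (⟨m, fun _ => Set.univ⟩ : SRel S A) ∈ R := by
  have full0 : (⟨0, fun _ => Set.univ⟩ : SRel S A) ∈ R := by
    have h := hR.2.2.2.1 _ hR.1
    have he : prRel (deltaS S A) = (⟨0, fun _ => Set.univ⟩ : SRel S A) := by
      show (⟨0, fun s => {b : Fin 1 → A |
        ∃ a ∈ {a : Fin 2 → A | a 0 = a 1}, b = fun j => a j.succ}⟩ : SRel S A) = _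
      exact mk_congr fun s b => ⟨fun _ => trivial,
        fun _ => ⟨fun _ => b 0, rfl, funext fun j => by rw [show j = 0 from Subsingleton.elim (α := Fin 1) j 0]⟩⟩
    rw [← he]; exact h
  induction m with
  | zero => exact full0
  | succ m ih =>
    have h := hR.2.2.2.2.1 _ ih _ full0
    have he : prodRel (⟨m, fun _ => Set.univ⟩ : SRel S A) ⟨0, fun _ => Set.univ⟩ =
        (⟨m + 1, fun _ => Set.univ⟩ : SRel S A) :=
      mk_congr fun s a => ⟨fun _ => trivial, fun _ => ⟨trivial, trivial⟩⟩
    rw [← he]; exact h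

lemma perm_mem {R : Set (SRel S A)} (hR : IsSRelClone R) (m : ℕ)
    (π : Equiv.Perm (Fin (m + 1))) (g : S → Set (Fin (m + 1) → A))
    (hg : (⟨m, g⟩ : SRel S A) ∈ R) :
    (⟨m, fun s => {b | (fun i => b (π i)) ∈ g s}⟩ : SRel S A) ∈ R := by
  set P : Equiv.Perm (Fin (m + 1)) → Prop := fun π =>
    ∀ g : S → Set (Fin (m + 1) → A), (⟨m, g⟩ : SRel S A) ∈ R →
      (⟨m, fun s => {b | (fun i => b (π i)) ∈ g s}⟩ : SRel S A) ∈ R with hP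
  suffices hπ : P π from hπ g hg
  have Pone : P 1 := by
    intro g hg
    have he : (fun s => {b : Fin (m + 1) → A |
        (fun i => b ((1 : Equiv.Perm (Fin (m + 1))) i)) ∈ g s}) = g := by
      funext s; ext b; simp
    rw [he]; exact hg
  have Pmul : ∀ π1 π2, P π1 → P π2 → P (π1 * π2) := by
    intro π1 π2 h1 h2 g hg
    have h3 := h1 _ (h2 g hg)
    have he : (fun s => {b : Fin (m + 1) → A | (fun i => b (π1 i)) ∈
        {c : Fin (m + 1) → A | (fun i => c (π2 i)) ∈ g s}}) =
        fun s => {b : Fin (m + 1) → A | (fun i => b ((π1 * π2) i)) ∈ g s} := by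
      funext s; ext b
      simp [Equiv.Perm.mul_apply]
    rw [← he]; exact h3
  have Ppow : ∀ (n : ℕ) π1, P π1 → P (π1 ^ n) := by
    intro n
    induction n with
    | zero => intro π1 _; rw [pow_zero]; exact Pone
    | succ n ih => intro π1 h1; rw [pow_succ]; exact Pmul _ _ (ih π1 h1) h1
  have Pinv : ∀ π1, P π1 → P π1⁻¹ := by
    intro π1 h1
    have hpos : 0 < orderOf π1 := orderOf_pos π1
    have hord := pow_orderOf_eq_one π1
    have hmul : π1 * π1 ^ (orderOf π1 - 1) = 1 := by
      calc π1 * π1 ^ (orderOf π1 - 1) = π1 ^ ((orderOf π1 - 1) + 1) := (pow_succ' π1 _).symm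
        _ = π1 ^ orderOf π1 := by congr 1; omega
        _ = 1 := hord
    have h2 : π1⁻¹ = π1 ^ (orderOf π1 - 1) := (eq_inv_of_mul_eq_one_right hmul).symm
    rw [h2]; exact Ppow _ _ h1
  have Prot : P (Equiv.subRight (1 : Fin (m + 1))) := by
    intro g hg
    exact hR.2.1 _ hg
  have Pswap : P (Equiv.swap (0 : Fin (m + 1)) 1) := fun g hg => hR.2.2.1 _ hg
  cases m with
  | zero =>
    have hp1 : π = 1 := Equiv.ext fun x => Subsingleton.elim (α := Fin 1) _ _
    rw [hp1]; exact Pone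
  | succ m =>
    have hgen := Equiv.Perm.closure_cycle_adjacent_swap
      (isCycle_finRotate (n := m)) support_finRotate (0 : Fin (m + 2))
    have hπmem : π ∈ Subgroup.closure
        {finRotate (m + 2), Equiv.swap 0 (finRotate (m + 2) 0)} := by
      rw [hgen]; exact Subgroup.mem_top π
    have hrot : P (finRotate (m + 2)) := by
      have hfr : finRotate (m + 2) = (Equiv.subRight (1 : Fin (m + 2)))⁻¹ := by
        rw [eq_comm, inv_eq_iff_mul_eq_one]
        apply Equiv.ext
        intro x
        show (Equiv.subRight (1 : Fin (m + 2))) (finRotate (m + 2) x) = x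
        rw [finRotate_succ_apply]
        show x + 1 - 1 = x
        simp
      rw [hfr]; exact Pinv _ Prot
    have hswap : P (Equiv.swap (0 : Fin (m + 2)) (finRotate (m + 2) 0)) := by
      have h0 : finRotate (m + 2) (0 : Fin (m + 2)) = 1 := by
        rw [finRotate_succ_apply, zero_add]
      rw [h0]; exact Pswap
    refine Subgroup.closure_induction (p := fun x _ => P x) ?_ Pone
      (fun x y _ _ hx hy => Pmul x y hx hy) (fun x _ hx => Pinv x hx) hπmem
    intro x hx
    simp only [Set.mem_insert_iff, Set.mem_singleton_iff] at hx
    rcases hx with rfl | rfl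
    · exact hrot
    · exact hswap

lemma exists_perm {α : Type*} [DecidableEq α] {u v p q : α} (huv : u ≠ v) (hpq : p ≠ q) :
    ∃ π : Equiv.Perm α, π u = p ∧ π v = q := by
  refine ⟨Equiv.swap (Equiv.swap u p v) q * Equiv.swap u p, ?_, ?_⟩
  · show Equiv.swap (Equiv.swap u p v) q (Equiv.swap u p u) = p
    rw [Equiv.swap_apply_left]
    apply Equiv.swap_apply_of_ne_of_ne
    · intro h
      have h4 : Equiv.swap u p p = Equiv.swap u p (Equiv.swap u p v) := by rw [← h]
      rw [Equiv.swap_apply_right, Equiv.swap_apply_self] at h4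
      exact huv h4
    · exact hpq
  · show Equiv.swap (Equiv.swap u p v) q (Equiv.swap u p v) = q
    exact Equiv.swap_apply_left _ _

lemma eq_mem {R : Set (SRel S A)} (hR : IsSRelClone R) (m : ℕ) (p q : Fin (m + 1)) :
    (⟨m, fun _ => {a | a p = a q}⟩ : SRel S A) ∈ R := by
  by_cases hpq : p = q
  · subst hpq
    have h := full_mem hR m
    have he : (fun (_ : S) => (Set.univ : Set (Fin (m + 1) → A))) =
        fun _ => {a : Fin (m + 1) → A | a p = a p} := by
      funext s; ext a; simp
    rw [← he]; exact h
  · suffices hbase : ∃ u v : Fin (m + 1), u ≠ v ∧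
        (⟨m, fun _ => {a | a u = a v}⟩ : SRel S A) ∈ R by
      obtain ⟨u, v, huv, hbase⟩ := hbase
      obtain ⟨π, hπu, hπv⟩ := exists_perm huv hpq
      have h := perm_mem hR m π _ hbase
      have he : (fun (s : S) => {b : Fin (m + 1) → A |
          (fun i => b (π i)) ∈ {a : Fin (m + 1) → A | a u = a v}}) =
          fun _ => {a : Fin (m + 1) → A | a p = a q} := by
        funext s; ext b
        simp only [Set.mem_setOf_eq]
        rw [hπu, hπv]
      rw [← he]; exact h
    cases m with
    | zero => exact absurd (Subsingleton.elim (α := Fin 1) p q) hpq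
    | succ m' =>
      cases m' with
      | zero => exact ⟨0, 1, by decide, hR.1⟩
      | succ k =>
        have h := hR.2.2.2.2.1 _ (full_mem hR k) _ hR.1
        have h' : (⟨k + 1 + 1, fun s => {c : Fin (k + 1 + 1 + 1) → A |
            (fun i : Fin (k + 1) => c ⟨i.val, by omega⟩) ∈ (Set.univ : Set (Fin (k + 1) → A)) ∧
            (fun i : Fin 2 => c ⟨k + 1 + i.val, by omega⟩) ∈
              {a : Fin 2 → A | a 0 = a 1}}⟩ : SRel S A) ∈ R := h
        refine ⟨⟨k + 1, by omega⟩, ⟨k + 1 + 1, by omega⟩,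
          by simp only [ne_eq, Fin.mk.injEq]; omega, ?_⟩
        have he : (⟨k + 1 + 1, fun s => {c : Fin (k + 1 + 1 + 1) → A |
            (fun i : Fin (k + 1) => c ⟨i.val, by omega⟩) ∈ (Set.univ : Set (Fin (k + 1) → A)) ∧
            (fun i : Fin 2 => c ⟨k + 1 + i.val, by omega⟩) ∈
              {a : Fin 2 → A | a 0 = a 1}}⟩ : SRel S A) =
            ⟨k + 1 + 1, fun _ => {a : Fin (k + 1 + 1 + 1) → A |
              a ⟨k + 1, by omega⟩ = a ⟨k + 1 + 1, by omega⟩}⟩ := by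
          refine mk_congr fun s a => ?_
          simp only [Set.mem_setOf_eq, Set.mem_univ, true_and, Fin.val_zero, Fin.val_one,
            add_zero]
        rw [he] at h'
        exact h'
lemma constraints_mem {R : Set (SRel S A)} (hR : IsSRelClone R) {M : ℕ}
    (g : S → Set (Fin (M + 1) → A)) (hg : (⟨M, g⟩ : SRel S A) ∈ R) :
    ∀ (K : ℕ) (p q : Fin K → Fin (M + 1)),
      (⟨M, fun s => {a | a ∈ g s ∧ ∀ j, a (p j) = a (q j)}⟩ : SRel S A) ∈ R := by
  intro K
  induction K with
  | zero =>
    intro p q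
    have he : (fun s => {a : Fin (M + 1) → A |
        a ∈ g s ∧ ∀ j : Fin 0, a (p j) = a (q j)}) = g := by
      funext s; ext a; simp
    rw [he]; exact hg
  | succ K ih =>
    intro p q
    have h1 := ih (fun j => p j.castSucc) (fun j => q j.castSucc)
    have h2 := eq_mem hR M (p (Fin.last K)) (q (Fin.last K))
    have h3 := hR.2.2.2.2.2.1 _ h1 _ h2
    have he : interRel
        (⟨M, fun s => {a : Fin (M + 1) → A |
          a ∈ g s ∧ ∀ j : Fin K, a (p j.castSucc) = a (q j.castSucc)}⟩ : SRel S A)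
        ⟨M, fun _ => {a : Fin (M + 1) → A | a (p (Fin.last K)) = a (q (Fin.last K))}⟩ =
        ⟨M, fun s => {a | a ∈ g s ∧ ∀ j : Fin (K + 1), a (p j) = a (q j)}⟩ := by
      unfold interRel
      rw [dif_pos rfl]
      refine mk_congr fun s a => ?_
      simp only [Set.mem_setOf_eq]
      constructor
      · rintro ⟨⟨hag, hcs⟩, hlast⟩
        refine ⟨hag, fun j => ?_⟩
        induction j using Fin.lastCases with
        | last => exact hlast
        | cast j => exact hcs j
      · rintro ⟨hag, hall⟩
        exact ⟨⟨hag, fun j => hall j.castSucc⟩, hall (Fin.last K)⟩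
    rw [he] at h3
    exact h3


lemma cast_mem {R : Set (SRel S A)} {M M' : ℕ} (h : M = M')
    (g : S → Set (Fin (M + 1) → A)) (hg : (⟨M, g⟩ : SRel S A) ∈ R) :
    (⟨M', fun s => {a : Fin (M' + 1) → A |
      (fun i : Fin (M + 1) => a (Fin.cast (congrArg (· + 1) h) i)) ∈ g s}⟩ : SRel S A) ∈ R := by
  subst h
  have he : (fun s => {a : Fin (M + 1) → A |
      (fun i : Fin (M + 1) => a (Fin.cast (congrArg (· + 1) rfl) i)) ∈ g s}) = g := by
    funext s; ext a
    have : (fun i : Fin (M + 1) => a (Fin.cast (congrArg (· + 1) rfl) i)) = a := by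
      funext i; exact congrArg a (Fin.ext rfl)
    rw [Set.mem_setOf_eq, this]
  rw [he]; exact hg

lemma prIter_mem {R : Set (SRel S A)} (hR : IsSRelClone R) :
    ∀ (k t : ℕ) (g : S → Set (Fin (t + k + 1) → A)),
      (⟨t + k, g⟩ : SRel S A) ∈ R →
      (⟨t, fun s => {b : Fin (t + 1) → A |
        ∃ a ∈ g s, b = fun j => a ⟨k + j.val, by have := j.isLt; omega⟩}⟩ : SRel S A) ∈ R := by
  intro k
  induction k with
  | zero =>
    intro t g hg
    have he : (fun s => {b : Fin (t + 1) → A |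
        ∃ a ∈ g s, b = fun j => a ⟨0 + j.val, by have := j.isLt; omega⟩}) = g := by
      funext s; ext b
      simp only [Set.mem_setOf_eq]
      constructor
      · rintro ⟨a, ha, rfl⟩
        have hb : (fun j : Fin (t + 1) =>
            a ⟨0 + j.val, by have := j.isLt; omega⟩) = a := by
          funext j
          exact congrArg a (Fin.ext (show 0 + j.val = j.val by omega))
        rw [hb]; exact ha
      · intro hb
        exact ⟨b, hb, funext fun j =>
          (congrArg b (Fin.ext (show 0 + j.val = j.val by omega))).symm⟩
    rw [he]; exact hg
  | succ k ih =>
    intro t g hg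
    have h' : (⟨t + k, fun s => {b : Fin (t + k + 1) → A |
        ∃ a ∈ g s, b = fun j => a j.succ}⟩ : SRel S A) ∈ R := hR.2.2.2.1 _ hg
    have h2 := ih t _ h'
    have he : (fun s => {b : Fin (t + 1) → A |
        ∃ a' ∈ {b : Fin (t + k + 1) → A | ∃ a ∈ g s, b = fun j => a j.succ},
          b = fun j => a' ⟨k + j.val, by have := j.isLt; omega⟩}) =
        fun s => {b : Fin (t + 1) → A |
          ∃ a ∈ g s, b = fun j => a ⟨k + 1 + j.val, by have := j.isLt; omega⟩} := by
      funext s; ext b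
      simp only [Set.mem_setOf_eq]
      constructor
      · rintro ⟨a', ⟨a, ha, rfl⟩, rfl⟩
        exact ⟨a, ha, funext fun j =>
          congrArg a (Fin.ext (show k + j.val + 1 = k + 1 + j.val by omega))⟩
      · rintro ⟨a, ha, rfl⟩
        exact ⟨fun w => a w.succ, ⟨a, ha, rfl⟩, funext fun j =>
          congrArg a (Fin.ext (show k + 1 + j.val = k + j.val + 1 by omega))⟩
    rw [he] at h2
    exact h2

lemma prMulti_mem {R : Set (SRel S A)} (hR : IsSRelClone R) (σ : SRel S A)
    (hσ : σ ∈ R) {t : ℕ} (z : Fin (t + 1) → Fin (σ.m + 1)) : prMulti σ z ∈ R := by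
  obtain ⟨m, g⟩ := σ
  have hzlt : ∀ j, (z j).val < m + 1 := fun j => (z j).isLt
  have hfull := full_mem hR t
  have hP := hR.2.2.2.2.1 _ hσ _ hfull
  have hP' : (⟨m + t + 1, fun s => {c : Fin (m + t + 1 + 1) → A |
      (fun i : Fin (m + 1) => c ⟨i.val, by have := i.isLt; omega⟩) ∈ g s ∧
      (fun i : Fin (t + 1) => c ⟨m + 1 + i.val, by have := i.isLt; omega⟩) ∈
        (Set.univ : Set (Fin (t + 1) → A))}⟩ : SRel S A) ∈ R := hP
  have hC := constraints_mem hR _ hP' (t + 1)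
    (fun j => ⟨m + 1 + j.val, by have := j.isLt; omega⟩)
    (fun j => ⟨(z j).val, by have := hzlt j; omega⟩)
  have hT := cast_mem (show m + t + 1 = t + (m + 1) by omega) _ hC
  have hPr := prIter_mem hR (m + 1) t _ hT
  convert hPr using 1
  refine mk_congr fun s b => ?_
  simp only [Set.mem_setOf_eq]
  constructor
  · rintro ⟨a, ha, rfl⟩
    set c : Fin (m + t + 1 + 1) → A := fun w =>
      if h : w.val < m + 1 then a ⟨w.val, h⟩
      else a (z ⟨w.val - (m + 1), by have := w.isLt; omega⟩) with hcdef
    have hcpos : ∀ (w : Fin (m + t + 1 + 1)) (h : w.val < m + 1), c w = a ⟨w.val, h⟩ :=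
      fun w h => dif_pos h
    have hcneg : ∀ (w : Fin (m + t + 1 + 1)) (h : ¬ w.val < m + 1),
        c w = a (z ⟨w.val - (m + 1), by have := w.isLt; omega⟩) :=
      fun w h => dif_neg h
    have hc3 : ∀ j : Fin (t + 1),
        c ⟨m + 1 + j.val, by have := j.isLt; omega⟩ = a (z j) := by
      intro j
      rw [hcneg _ (by show ¬ m + 1 + j.val < m + 1; omega)]
      congr 1
      congr 1
      apply Fin.ext
      show m + 1 + j.val - (m + 1) = j.val
      omega
    refine ⟨fun w => c (Fin.cast (by omega) w), ⟨⟨?_, trivial⟩, ?_⟩, ?_⟩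
    · have hfa : (fun i : Fin (m + 1) =>
          c ⟨i.val, by have := i.isLt; omega⟩) = a := by
        funext i
        rw [hcpos _ (show i.val < m + 1 from i.isLt)]
      exact hfa ▸ ha
    · intro j
      show c ⟨m + 1 + j.val, _⟩ = c ⟨(z j).val, _⟩
      rw [hc3 j, hcpos _ (show (z j).val < m + 1 from hzlt j)]
    · funext j
      exact (hc3 j).symm
  · rintro ⟨a', ⟨⟨hc1, -⟩, hc2⟩, rfl⟩
    exact ⟨_, hc1, funext fun j => hc2 j⟩

end Aux

/-- Every invariant `S`-relation `ρ ∈ SInv F` is a projection of `Γ_F(χ^{λ_ρ})`,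
where `λ_ρ` is the signum listing the tuples of `ρ`; consequently `SInv F` is the
`S`-relational clone generated by the relations `Γ_F(χ^{λ_ρ})`, `ρ ∈ SRel(A)`. -/
theorem SInv_generated_by_Gamma_chi {S A : Type*} [Monoid S] [Fintype S] [Fintype A]
    (F : Set (SOp S A)) :
    (∀ ρ ∈ SInv F, ∀ (nn : ℕ) (rr : Fin nn → (Fin (ρ.m + 1) → A)) (lam : Fin nn → S),
      (∀ s, ρ.rel s = { c | ∃ i, lam i = s ∧ c = rr i }) →
      (∀ i j, lam i = lam j → rr i = rr j → i = j) →
      ∀ χ : SRel S A, IsChi lam χ →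
        ∃ z : Fin (ρ.m + 1) → Fin (χ.m + 1), ρ = prMulti (Gamma F χ) z) ∧
    SInv F = SRg { σ : SRel S A |
      ∃ (ρ : SRel S A) (nn : ℕ) (rr : Fin nn → (Fin (ρ.m + 1) → A))
        (lam : Fin nn → S) (χ : SRel S A),
        (∀ s, ρ.rel s = { c | ∃ i, lam i = s ∧ c = rr i }) ∧
        (∀ i j, lam i = lam j → rr i = rr j → i = j) ∧
        IsChi lam χ ∧ σ = Gamma F χ } := by
  constructor
  · intro ρ hρ nn rr lam hlist _hinj χ hchi
    exact proj_of_inv hρ rr lam hlist χ hchi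
  · apply Set.Subset.antisymm
    · intro ρ hρ
      refine Set.mem_sInter.2 fun R hRQ => ?_
      obtain ⟨hclone, hQR⟩ := hRQ
      classical
      obtain ⟨nn, ⟨eT⟩⟩ := Finite.exists_equiv_fin
        {p : S × (Fin (ρ.m + 1) → A) // p.2 ∈ ρ.rel p.1}
      set lam : Fin nn → S := fun i => (eT.symm i).1.1 with hlam
      set rr : Fin nn → (Fin (ρ.m + 1) → A) := fun i => (eT.symm i).1.2 with hrr
      have hlist : ∀ s, ρ.rel s = {c | ∃ i, lam i = s ∧ c = rr i} := by
        intro s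
        ext c
        constructor
        · intro hc
          refine ⟨eT ⟨(s, c), hc⟩, ?_, ?_⟩
          · rw [hlam]; simp
          · rw [hrr]; simp
        · rintro ⟨i, rfl, rfl⟩
          exact (eT.symm i).2
      have hinj : ∀ i j, lam i = lam j → rr i = rr j → i = j := by
        intro i j h1 h2
        have h3 : eT.symm i = eT.symm j := Subtype.ext (Prod.ext h1 h2)
        exact eT.symm.injective h3
      have hne : Nonempty (Fin nn → A) := by
        rcases Nat.eq_zero_or_pos nn with h | h
        · subst h; exact ⟨fun i => i.elim0⟩
        · exact ⟨fun _ => (eT.symm ⟨0, h⟩).1.2 0⟩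
      have hpos : 0 < Fintype.card (Fin nn → A) := Fintype.card_pos_iff.mpr hne
      have hcard : Fintype.card (Fin nn → A) = (Fintype.card (Fin nn → A) - 1) + 1 := by
        omega
      set e : Fin ((Fintype.card (Fin nn → A) - 1) + 1) ≃ (Fin nn → A) :=
        (Fintype.equivFinOfCardEq hcard).symm with he0
      set χ : SRel S A := ⟨Fintype.card (Fin nn → A) - 1,
        fun s => {c | ∃ i, lam i = s ∧ c = fun w => e w i}⟩ with hchidef
      have hchi : IsChi lam χ := ⟨e, fun s => rfl⟩
      obtain ⟨z, hz⟩ := proj_of_inv hρ rr lam hlist χ hchi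
      have hG : Gamma F χ ∈ R := hQR ⟨ρ, nn, rr, lam, χ, hlist, hinj, hchi, rfl⟩
      rw [hz]
      exact prMulti_mem hclone _ hG z
    · refine Set.sInter_subset_of_mem ⟨sinv_clone F, ?_⟩
      rintro σ ⟨ρ', nn, rr, lam, χ, -, -, -, rfl⟩
      exact gamma_inv F χ

end SPreclone
end

section
/- Let S be a finite monoid and A = {0, 1, …, k−1} with k ≥ 2. The full S-preclone SOp(A) is finitely generated: SOp(A) = ⟨ {m^{(e,e)}} ∪ { id^s : s ∈ S } ⟩_S, where m^{(e,e)} is the binary S-operation with underlying function m(x,y) := max(x,y) ⊕ 1 (⊕ denoting addition modulo k) and signum (e,e), and id^s is the identity function on A equipped with signum (s). -/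
namespace SPreclone

/-!
The operations of an `S`-preclone whose signa are all `e` form an ordinary clone: `ζ` and `τ`
generate all permutations of the arguments, which together with `∇` and `Δ` give all minors,
and composition plus minors gives superposition. On `Fin (k + 2)` the clone generated by
`m(x, y) = max(x, y) + 1` is everything: it contains `x + c`, `max`, the constants, and hence
the functions `x ↦ if x = a then c else 0`, whose pointwise maximum over `a` is any given
`f`. Finally, composing with `id^s` after moving an argument to the front multiplies its
signum by `s`, so every signum is reached.
-/

open Equiv

theorem SOp.ext_cast {S A : Type*} {f g : SOp S A} (h : f.n = g.n)
    (hfn : ∀ x, f.fn (fun i => x (Fin.cast (by rw [h]) i)) = g.fn x)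
    (hsgn : ∀ i, f.sgn (Fin.cast (by rw [h]) i) = g.sgn i) : f = g := by
  obtain ⟨n, fn, u⟩ := f
  obtain ⟨m, gn, v⟩ := g
  obtain rfl : n = m := h
  simp only [Fin.cast_eq_self] at hfn hsgn
  exact congrArg₂ (SOp.mk n) (funext hfn) (funext hsgn)

section

variable {S A : Type*} [Monoid S]

theorem compOp_id_sgn (n : ℕ) (fn : (Fin (n + 1) → A) → A) (u : Fin (n + 1) → S) (s : S) :
    compOp ⟨n, fn, u⟩ ⟨0, fun x => x 0, fun _ => s⟩ =
      ⟨n, fn, Function.update u 0 (s * u 0)⟩ := by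
  unfold compOp
  refine SOp.ext_cast (Nat.zero_add n) (fun x => congrArg fn (funext fun i => ?_)) fun i => ?_
  · cases i using Fin.cases
    · rfl
    · exact congrArg x (Fin.ext (by simp [add_comm]))
  · simp only [Fin.val_cast, Function.update_apply]
    rcases Fin.eq_zero_or_eq_succ i with rfl | ⟨j, rfl⟩
    · simp
    · simp [Fin.succ]

theorem UOp.mem_congr {T : Set (UOp A)} {n : ℕ} {f g : (Fin (n + 1) → A) → A}
    (h : ⟨n, f⟩ ∈ T) (hfg : ∀ x, f x = g x) : ⟨n, g⟩ ∈ T :=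
  funext hfg ▸ h

theorem exists_perm_zero_one {n : ℕ} {i₀ i₁ : Fin (n + 2)} (h : i₀ ≠ i₁) :
    ∃ e : Perm (Fin (n + 2)), e 0 = i₀ ∧ e 1 = i₁ := by
  have hj : swap 0 i₀ i₁ ≠ 0 := by
    intro h'
    exact h (by simpa using (congrArg (swap 0 i₀) h').symm)
  refine ⟨swap 0 i₀ * swap 1 (swap 0 i₀ i₁), ?_, ?_⟩
  · rw [Perm.mul_apply, swap_apply_of_ne_of_ne (by simp) hj.symm, swap_apply_left]
  · rw [Perm.mul_apply, swap_apply_left, swap_apply_self]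

def eOps (P : Set (SOp S A)) : Set (UOp A) := { f | ⟨f.n, f.fn, fun _ => 1⟩ ∈ P }

namespace IsSPreclone

variable {P : Set (SOp S A)} (hP : IsSPreclone P) {n m : ℕ}
include hP

theorem perm_mem {fn : (Fin (n + 1) → A) → A} {u : Fin (n + 1) → S}
    (h : ⟨n, fn, u⟩ ∈ P) (e : Perm (Fin (n + 1))) :
    ⟨n, fun x => fn (x ∘ e), u ∘ e.symm⟩ ∈ P := by
  let M : Submonoid (Perm (Fin (n + 1))) :=
    { carrier := { e | ∀ fn u, (⟨n, fn, u⟩ : SOp S A) ∈ P →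
        (⟨n, fun x => fn (x ∘ e), u ∘ e.symm⟩ : SOp S A) ∈ P }
      mul_mem' := fun ha hb fn u h => ha _ _ (hb fn u h)
      one_mem' := fun _ _ h => h }
  suffices e ∈ M from this fn u h
  cases n with
  | zero => exact (Subsingleton.elim (α := Perm (Fin 1)) 1 e) ▸ M.one_mem
  | succ n =>
    have hgen := Perm.closure_cycle_adjacent_swap (isCycle_finRotate (n := n))
      (by simp [support_finRotate]) 0
    rw [finRotate_apply, zero_add, ← Subgroup.toSubmonoid_inj,
      Subgroup.closure_toSubmonoid_of_finite] at hgen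
    refine (Submonoid.closure_le.mpr ?_ : _ ≤ M) (by rw [hgen]; exact Subgroup.mem_top e)
    rintro _ (rfl | rfl) fn u h
    · have hfn : (fun x => fn (x ∘ finRotate (n + 2))) = fun x => fn fun j => x (j + 1) := by
        simp only [Function.comp_def, finRotate_apply]
      have hu : u ∘ (finRotate (n + 2)).symm = fun i => u (i - 1) := by
        simp only [Function.comp_def, finRotate_symm_apply]
      rw [hfn, hu]
      exact hP.2.1 _ h
    · exact hP.2.2.1 _ h

theorem perm_mem_eOps {f : (Fin (n + 1) → A) → A} (hf : ⟨n, f⟩ ∈ eOps P)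
    (e : Perm (Fin (n + 1))) : ⟨n, fun x => f (x ∘ e)⟩ ∈ eOps P :=
  hP.perm_mem hf e

theorem nabla_mem_eOps {f : (Fin (n + 1) → A) → A} (hf : ⟨n, f⟩ ∈ eOps P) :
    ⟨n + 1, fun x => f (x ∘ Fin.succ)⟩ ∈ eOps P := by
  have hs : (Fin.cases 1 fun _ => 1 : Fin (n + 2) → S) = fun _ => 1 :=
    funext fun i => Fin.cases rfl (fun _ => rfl) i
  show (⟨n + 1, _, fun _ => 1⟩ : SOp S A) ∈ P
  rw [← hs]
  exact hP.2.2.2.1 1 _ hf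

theorem delta_mem_eOps {f : (Fin (n + 2) → A) → A} (hf : ⟨n + 1, f⟩ ∈ eOps P) :
    ⟨n, fun x => f fun j => x ⟨j.val - 1, by omega⟩⟩ ∈ eOps P := by
  show (⟨n, _, fun _ => 1⟩ : SOp S A) ∈ P
  simpa [deltaOp] using hP.2.2.2.2.1 _ hf

theorem comp_mem_eOps {f : (Fin (n + 1) → A) → A} {g : (Fin (m + 1) → A) → A}
    (hf : ⟨n, f⟩ ∈ eOps P) (hg : ⟨m, g⟩ ∈ eOps P) :
    ⟨m + n, fun x => f (Fin.cons (g fun i => x (Fin.castLE (by omega) i))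
      fun j => x ⟨m + 1 + j, by omega⟩)⟩ ∈ eOps P := by
  have hs : (fun i : Fin (m + n + 1) => if i.val < m + 1 then (1 : S) * 1 else 1) = fun _ => 1 :=
    funext fun i => by split <;> simp
  show (⟨m + n, _, fun _ => 1⟩ : SOp S A) ∈ P
  rw [← hs]
  exact hP.2.2.2.2.2 _ hf _ hg

theorem minor_mem_eOps_of_injective {f : (Fin (n + 1) → A) → A} (hf : ⟨n, f⟩ ∈ eOps P)
    (σ : Fin (n + 1) → Fin (m + 1)) (hσ : Function.Injective σ) :
    ⟨m, fun x => f (x ∘ σ)⟩ ∈ eOps P := by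
  obtain ⟨d, hd⟩ : ∃ d, m = n + d :=
    ⟨m - n, by
      have := Fintype.card_le_of_injective σ hσ
      rw [Fintype.card_fin, Fintype.card_fin] at this
      omega⟩
  induction d generalizing n with
  | zero =>
    subst hd
    exact hP.perm_mem_eOps hf (Equiv.ofBijective σ (Finite.injective_iff_bijective.mp hσ))
  | succ d ih =>
    obtain ⟨c, hc⟩ : ∃ c, c ∉ Set.range σ := by
      by_contra! hs
      have := Fintype.card_le_of_surjective σ fun c => hs c
      rw [Fintype.card_fin, Fintype.card_fin] at this
      omega
    exact ih (hP.nabla_mem_eOps hf) (Fin.cons c σ) (Fin.cons_injective_iff.mpr ⟨hc, hσ⟩)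
      (by omega)

theorem minor_mem_eOps {f : (Fin (n + 1) → A) → A} (hf : ⟨n, f⟩ ∈ eOps P)
    (σ : Fin (n + 1) → Fin (m + 1)) : ⟨m, fun x => f (x ∘ σ)⟩ ∈ eOps P := by
  induction n with
  | zero =>
    exact hP.minor_mem_eOps_of_injective hf σ fun a b _ => Subsingleton.elim (α := Fin 1) a b
  | succ n ih =>
    by_cases hσ : Function.Injective σ
    · exact hP.minor_mem_eOps_of_injective hf σ hσ
    -- move two arguments identified by `σ` to the front and merge them with `Δ`
    obtain ⟨i₀, i₁, hσi, hne⟩ := Function.not_injective_iff.mp hσ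
    obtain ⟨e, he₀, he₁⟩ := exists_perm_zero_one hne
    have h := ih (hP.delta_mem_eOps (hP.perm_mem_eOps hf e.symm)) fun j => σ (e j.succ)
    refine UOp.mem_congr h fun x => congrArg f (funext fun i => congrArg x ?_)
    obtain ⟨j, rfl⟩ := e.surjective i
    rcases Fin.eq_zero_or_eq_succ j with rfl | ⟨j, rfl⟩
    · simp only [Equiv.symm_apply_apply]
      refine (congrArg (σ ∘ e) (Fin.ext (by simp) : _ = (1 : Fin (n + 2)))).trans ?_
      rw [Function.comp_apply, he₀, he₁, hσi]
    · simp

theorem update_mem_eOps {f g : (Fin (n + 1) → A) → A} (hf : ⟨n, f⟩ ∈ eOps P)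
    (hg : ⟨n, g⟩ ∈ eOps P) (i : Fin (n + 1)) :
    ⟨n, fun x => f (Function.update x i (g x))⟩ ∈ eOps P := by
  -- feed `g` into a new first argument of `f`, then identify the two copies of the variables
  have hF := hP.minor_mem_eOps hf (m := n + 1) fun j => if j = i then 0 else j.succ
  have h := hP.minor_mem_eOps (hP.comp_mem_eOps hF hg)
    fun t => ⟨t.val % (n + 1), Nat.mod_lt _ n.succ_pos⟩
  refine UOp.mem_congr h fun x => congrArg f (funext fun j => ?_)
  simp only [Function.comp_apply, Function.update_apply]
  have hmod : ∀ t : Fin (n + 1), x ⟨t.val % (n + 1), Nat.mod_lt _ n.succ_pos⟩ = x t :=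
    fun t => congrArg x (Fin.ext (Nat.mod_eq_of_lt t.isLt))
  split_ifs <;> simp [hmod]

theorem superpose_mem_eOps {f : (Fin (n + 1) → A) → A} (hf : ⟨n, f⟩ ∈ eOps P)
    {g : Fin (n + 1) → (Fin (m + 1) → A) → A} (hg : ∀ i, ⟨m, g i⟩ ∈ eOps P) :
    ⟨m, fun x => f fun i => g i x⟩ ∈ eOps P := by
  -- keep the variables of `f` and of the `g i` apart, and substitute the `g i` one at a time
  have hpart : ∀ s : Finset (Fin (n + 1)), (⟨n + 1 + m, fun z => f fun i =>
      if i ∈ s then g i (fun j => z (Fin.natAdd (n + 1) j)) else z (Fin.castAdd (m + 1) i)⟩ :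
      UOp A) ∈ eOps P := by
    intro s
    induction s using Finset.induction_on with
    | empty => simpa [Function.comp_def] using hP.minor_mem_eOps hf (Fin.castAdd (m + 1))
    | insert j s hj ih =>
      refine UOp.mem_congr (hP.update_mem_eOps ih (hP.minor_mem_eOps (hg j) (Fin.natAdd (n + 1)))
        (Fin.castAdd (m + 1) j)) fun z => congrArg f (funext fun i => ?_)
      have hnat : ∀ v (k : Fin (m + 1)),
          Function.update z (Fin.castAdd (m + 1) j) v (Fin.natAdd (n + 1) k) =
            z (Fin.natAdd (n + 1) k) := by
        intro v k
        apply Function.update_of_ne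
        rw [Ne, Fin.ext_iff, Fin.val_natAdd, Fin.val_castAdd]
        omega
      by_cases hi : i = j
      · simp [hi, hj, Function.comp_def]
      · simp [hi, hnat]
  simpa using hP.minor_mem_eOps (hpart Finset.univ)
    (Fin.addCases (fun _ => 0) id : Fin (n + 1 + (m + 1)) → Fin (m + 1))

theorem isClone_eOps : IsClone (eOps P) :=
  ⟨fun _ i => hP.minor_mem_eOps hP.1 fun _ => i, fun _ hf _ _ hg => hP.superpose_mem_eOps hf hg⟩

theorem update_sgn_mem {s : S} (hid : ⟨0, fun x => x 0, fun _ => s⟩ ∈ P)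
    {fn : (Fin (n + 1) → A) → A} {u : Fin (n + 1) → S} (h : ⟨n, fn, u⟩ ∈ P)
    (i : Fin (n + 1)) :
    ⟨n, fn, Function.update u i (s * u i)⟩ ∈ P := by
  have h₁ := hP.2.2.2.2.2 _ (hP.perm_mem h (swap 0 i)) _ hid
  rw [compOp_id_sgn] at h₁
  convert hP.perm_mem h₁ (swap 0 i) using 2
  · funext x
    simp [Function.comp_def]
  · funext j
    simp [Function.update_apply, swap_apply_eq_iff]

theorem mem_of_mem_eOps (hid : ∀ s : S, ⟨0, fun x => x 0, fun _ => s⟩ ∈ P)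
    {fn : (Fin (n + 1) → A) → A} (h : ⟨n, fn⟩ ∈ eOps P) (t : Fin (n + 1) → S) :
    ⟨n, fn, t⟩ ∈ P := by
  have hpart : ∀ s : Finset (Fin (n + 1)),
      (⟨n, fn, fun i => if i ∈ s then t i else 1⟩ : SOp S A) ∈ P := by
    intro s
    induction s using Finset.induction_on with
    | empty => simpa using (show (⟨n, fn, fun _ => 1⟩ : SOp S A) ∈ P from h)
    | insert j s hj ih =>
      convert hP.update_sgn_mem (hid (t j)) ih j using 2
      funext i
      by_cases hi : i = j <;> simp [hi, hj]
  simpa using hpart Finset.univ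

end IsSPreclone

theorem IsClone.binary_comp_mem {C : Set (UOp A)} (hC : IsClone C) {n : ℕ} {w : A → A → A}
    (hw : ⟨1, fun x => w (x 0) (x 1)⟩ ∈ C) {f g : (Fin (n + 1) → A) → A}
    (hf : ⟨n, f⟩ ∈ C) (hg : ⟨n, g⟩ ∈ C) : ⟨n, fun x => w (f x) (g x)⟩ ∈ C :=
  hC.2 _ hw n ![f, g] (Fin.forall_fin_two.mpr ⟨hf, hg⟩)

section MaxSucc

variable {k n : ℕ}

theorem max_castSucc_last_add_one (z : Fin (k + 2)) :
    max z (Fin.last k).castSucc + 1 = if z = Fin.last (k + 1) then 0 else Fin.last (k + 1) := by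
  split_ifs with hz
  · rw [hz, max_eq_left (Fin.le_last _), Fin.last_add_one]
  · have hle : z ≤ (Fin.last k).castSucc :=
      Fin.le_castSucc_iff.mpr (Fin.succ_last k ▸ Fin.lt_last_iff_ne_last.mpr hz)
    rw [max_eq_right hle, Fin.coeSucc_eq_succ, Fin.succ_last]

theorem sup'_ite_zero_last {ι : Type*} [Fintype ι] [Nonempty ι] (p : ι → Prop)
    [DecidablePred p] :
    Finset.univ.sup' Finset.univ_nonempty (fun i => if p i then 0 else Fin.last (k + 1)) =
      if ∀ i, p i then 0 else Fin.last (k + 1) := by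
  split_ifs with h
  · simp [h]
  · obtain ⟨i, hi⟩ := not_forall.mp h
    exact le_antisymm (Finset.sup'_le _ _ fun _ _ => Fin.le_last _)
      (Finset.le_sup'_of_le _ (Finset.mem_univ i) (by simp [hi]))

namespace IsClone

variable {C : Set (UOp (Fin (k + 2)))} (hC : IsClone C)
  (hw : ⟨1, fun x => max (x 0) (x 1) + 1⟩ ∈ C)
include hC hw

theorem maxSucc_mem {f g : (Fin (n + 1) → Fin (k + 2)) → Fin (k + 2)} (hf : ⟨n, f⟩ ∈ C)
    (hg : ⟨n, g⟩ ∈ C) : ⟨n, fun x => max (f x) (g x) + 1⟩ ∈ C :=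
  hC.binary_comp_mem (w := fun a b => max a b + 1) hw hf hg

theorem add_mem {f : (Fin (n + 1) → Fin (k + 2)) → Fin (k + 2)} (hf : ⟨n, f⟩ ∈ C)
    (c : Fin (k + 2)) : ⟨n, fun x => f x + c⟩ ∈ C := by
  induction c using Fin.induction with
  | zero => simpa using hf
  | succ c ih =>
    refine UOp.mem_congr (hC.maxSucc_mem hw ih ih) fun x => ?_
    rw [max_self, add_assoc, Fin.coeSucc_eq_succ]

theorem max_mem {f g : (Fin (n + 1) → Fin (k + 2)) → Fin (k + 2)} (hf : ⟨n, f⟩ ∈ C)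
    (hg : ⟨n, g⟩ ∈ C) : ⟨n, fun x => max (f x) (g x)⟩ ∈ C :=
  UOp.mem_congr (hC.add_mem hw (hC.maxSucc_mem hw hf hg) (Fin.last _)) fun x => by
    rw [add_assoc, add_comm 1, Fin.last_add_one, add_zero]

theorem sup'_mem {ι : Type*} (s : Finset ι) (hs : s.Nonempty)
    {F : ι → (Fin (n + 1) → Fin (k + 2)) → Fin (k + 2)}
    (hF : ∀ i ∈ s, ⟨n, F i⟩ ∈ C) :
    ⟨n, fun x => s.sup' hs fun i => F i x⟩ ∈ C := by
  induction hs using Finset.Nonempty.cons_induction with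
  | singleton a => simpa using hF a (by simp)
  | cons a s ha hs ih =>
    refine UOp.mem_congr (hC.max_mem hw (hF a (by simp)) (ih fun i hi => hF i (by simp [hi])))
      fun x => ?_
    rw [Finset.sup'_cons]

theorem const_mem (b : Fin (k + 2)) : ⟨n, fun _ => b⟩ ∈ C := by
  have hlast : ⟨n, fun _ => Fin.last (k + 1)⟩ ∈ C := by
    refine UOp.mem_congr (hC.sup'_mem hw Finset.univ Finset.univ_nonempty
      fun c _ => hC.add_mem hw (hC.1 n 0) c) fun x => ?_
    exact le_antisymm (Finset.sup'_le _ _ fun _ _ => Fin.le_last _)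
      (Finset.le_sup'_of_le _ (Finset.mem_univ (Fin.last _ - x 0)) (by simp))
  refine UOp.mem_congr (hC.add_mem hw hlast (b + 1)) fun _ => ?_
  rw [add_comm b, ← add_assoc, Fin.last_add_one, zero_add]

theorem ite_eq_last_mem {f : (Fin (n + 1) → Fin (k + 2)) → Fin (k + 2)}
    (hf : ⟨n, f⟩ ∈ C) :
    ⟨n, fun x => if f x = Fin.last (k + 1) then 0 else Fin.last (k + 1)⟩ ∈ C :=
  UOp.mem_congr (hC.maxSucc_mem hw hf (hC.const_mem hw _)) fun _ => max_castSucc_last_add_one _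

theorem ite_eq_mem (a : Fin (n + 1) → Fin (k + 2)) (c : Fin (k + 2)) :
    ⟨n, fun x => if x = a then c else 0⟩ ∈ C := by
  have hdiff : ⟨n, fun x => if x = a then 0 else Fin.last (k + 1)⟩ ∈ C := by
    refine UOp.mem_congr (hC.sup'_mem hw Finset.univ Finset.univ_nonempty
      fun i _ => hC.ite_eq_last_mem hw (hC.add_mem hw (hC.1 n i) (Fin.last (k + 1) - a i)))
      fun x => ?_
    simp only [← eq_sub_iff_add_eq, sub_sub_cancel, sup'_ite_zero_last, funext_iff]
    congr 1
  have hmatch := hC.ite_eq_last_mem hw hdiff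
  refine UOp.mem_congr (hC.add_mem hw
    (hC.maxSucc_mem hw hmatch (hC.const_mem hw (Fin.last (k + 1) - c))) c) fun x => ?_
  by_cases hx : x = a
  · simp [hx, max_eq_left (Fin.le_last _), Fin.last_add_one]
  · simp [hx, add_right_comm _ 1 c, Fin.last_add_one]

theorem eq_univ_of_maxSucc_mem : C = Set.univ := by
  refine Set.eq_univ_of_forall fun ⟨n, f⟩ => UOp.mem_congr (hC.sup'_mem hw Finset.univ
    Finset.univ_nonempty fun a _ => hC.ite_eq_mem hw a (f a)) fun x => ?_
  refine le_antisymm (Finset.sup'_le _ _ fun a _ => ?_)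
    (Finset.le_sup'_of_le _ (Finset.mem_univ x) (by simp))
  split_ifs with h
  · rw [h]
  · exact Fin.zero_le _

end IsClone

end MaxSucc

end

theorem SOp_finitely_generated_general {S : Type*} [Monoid S] (k : ℕ) :
    SSg (({⟨1, fun x => max (x 0) (x 1) + 1, fun _ => 1⟩} :
        Set (SOp S (Fin (k + 2)))) ∪
      { f : SOp S (Fin (k + 2)) | ∃ s : S, f = ⟨0, fun x => x 0, fun _ => s⟩ }) =
      (Set.univ : Set (SOp S (Fin (k + 2)))) := by
  refine Set.eq_univ_of_forall fun ⟨n, fn, t⟩ => Set.mem_sInter.mpr ?_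
  rintro P ⟨hP, hgen⟩
  have hC : eOps P = Set.univ := hP.isClone_eOps.eq_univ_of_maxSucc_mem (hgen (Or.inl rfl))
  exact hP.mem_of_mem_eOps (fun s => hgen (Or.inr ⟨s, rfl⟩)) (hC ▸ Set.mem_univ _) t

/-- The full `S`-preclone on `A = {0,…,k−1}` (`k ≥ 2`) is finitely generated:
`SOp(A) = ⟨{m^{(e,e)}} ∪ {id^s ∣ s ∈ S}⟩_S`, where `m(x,y) = max(x,y) ⊕ 1`
(addition modulo `k`) carries signum `(e,e)`. -/
theorem SOp_finitely_generated {S : Type*} [Monoid S] [Fintype S] (k : ℕ) :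
    SSg (({⟨1, fun x => max (x 0) (x 1) + 1, fun _ => 1⟩} :
        Set (SOp S (Fin (k + 2)))) ∪
      { f : SOp S (Fin (k + 2)) | ∃ s : S, f = ⟨0, fun x => x 0, fun _ => s⟩ }) =
      (Set.univ : Set (SOp S (Fin (k + 2)))) :=
  SOp_finitely_generated_general k

end SPreclone
end
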